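/- Let k be a field and a ≤ b real numbers. Then k[a,b) ⊗_gr k(−∞,d) = 0 for any d ∈ ℝ, while k[a,∞) ⊗_gr k(−∞,d) ≅ k(−∞, a+d). -/

import Mathlib

/-!
In degree `r` the diagram `(s, t) ↦ k[I]_s ⊗ k[J]_t` over `{s + t ≤ r}` is one-dimensional,
spanned by `1 ⊗ 1`, on the indices with `(s, t) ∈ I × J` and zero elsewhere, and its structure
maps send `1 ⊗ 1` to `1 ⊗ 1` inside the support. So the image of `1 ⊗ 1` in any cocone agrees
with its image at any supported smaller index, and vanishes as soon as some larger index leaves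
the support.

For `I = [a, b)` and `J = (-∞, d)`, the index `(s, min t (r - b))` lies below `(s, t)` and below
`(b, min t (r - b))`, which is outside the support: the colimit is zero.
For `I = [a, ∞)`, every supported index is joined to `(a, r - a)` through
`(a, min t (r - a))`, and `(a, r - a)` is supported exactly when `r < a + d`; multiplication
`u ⊗ v ↦ u v` then exhibits `k[(-∞, a + d)]_r` as the colimit, naturally in `r`.
-/

open CategoryTheory

noncomputable section
attribute [local instance] Classical.propDecidable
set_option linter.unusedSectionVars false

variable (R : Type) [Ring R] {P : Type} [Preorder P]

/-- Condition that a subset is order-convex. -/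
def IsConvexSet (I : Set P) : Prop := ∀ ⦃x y z : P⦄, x ∈ I → z ∈ I → x ≤ y → y ≤ z → y ∈ I

/-- The value of the interval persistence module at a point. -/
def intervalObj (I : Set P) (a : P) : Submodule R R :=
  if a ∈ I then (⊤ : Submodule R R) else ⊥

lemma intervalObj_eq_zero {I : Set P} {a : P} (h : a ∉ I) (x : intervalObj R I a) :
    x = 0 := by
  have hx := x.2
  simp only [intervalObj, if_neg h, Submodule.mem_bot] at hx
  exact Subtype.ext hx

/-- The structure map of the interval module between two degrees. -/
def intervalMapAux (I : Set P) (a b : P) :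
    (intervalObj R I a) →ₗ[R] (intervalObj R I b) :=
  if h : a ∈ I ∧ b ∈ I then
    Submodule.inclusion (by simp [intervalObj, h.1, h.2])
  else 0

lemma intervalMapAux_coe {I : Set P} {a b : P} (ha : a ∈ I) (hb : b ∈ I)
    (x : intervalObj R I a) : ((intervalMapAux R I a b x : R)) = (x : R) := by
  simp [intervalMapAux, ha, hb]

lemma intervalMapAux_of_not {I : Set P} {a b : P} (h : ¬(a ∈ I ∧ b ∈ I))
    (x : intervalObj R I a) : intervalMapAux R I a b x = 0 := by
  simp [intervalMapAux, h]

/-- The interval (indicator) persistence module of a convex set `I`,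
as a functor from the preorder `P` to `R`-modules. -/
def intervalModule (I : Set P) (hI : IsConvexSet I) : P ⥤ ModuleCat R where
  obj a := ModuleCat.of R (intervalObj R I a)
  map {a b} f := ModuleCat.ofHom (intervalMapAux R I a b)
  map_id a := by
    ext x
    by_cases h : a ∈ I
    · exact intervalMapAux_coe R h h x
    · rw [intervalObj_eq_zero R h x]
      simp
  map_comp {a b c} f g := by
    ext x
    show (intervalMapAux R I a c x : R) = (intervalMapAux R I b c (intervalMapAux R I a b x) : R)
    by_cases ha : a ∈ I
    · by_cases hc : c ∈ I
      · have hb : b ∈ I := hI ha hc (leOfHom f) (leOfHom g)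
        rw [intervalMapAux_coe R ha hc, intervalMapAux_coe R hb hc,
          intervalMapAux_coe R ha hb]
      · rw [intervalMapAux_of_not R (fun h => hc h.2),
          intervalMapAux_of_not R (fun h => hc h.2)]
    · rw [intervalObj_eq_zero R ha x]
      simp

end

lemma IsConvexSet.of_ordConnected {P : Type} [Preorder P] {s : Set P}
    (h : s.OrdConnected) : IsConvexSet s :=
  fun _ _ _ hx hz hxy hyz => h.out hx hz ⟨hxy, hyz⟩

open CategoryTheory Limits

noncomputable section
variable (k : Type) [Field k]

/-- The index poset `{(s,t) | s + t ≤ r}` for the graded tensor product. -/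
abbrev SumLe (r : ℝ) : Type := {p : ℝ × ℝ // p.1 + p.2 ≤ r}

lemma SumLe.le1 {r : ℝ} {p q : SumLe r} (h : p ≤ q) : p.1.1 ≤ q.1.1 := h.1
lemma SumLe.le2 {r : ℝ} {p q : SumLe r} (h : p ≤ q) : p.1.2 ≤ q.1.2 := h.2

/-- The diagram `(s,t) ↦ M_s ⊗ N_t` over `{(s,t) | s + t ≤ r}` whose colimit is the
degree-`r` piece of the graded tensor product `M ⊗_gr N`. -/
def grDiagram (M N : ℝ ⥤ ModuleCat k) (r : ℝ) : SumLe r ⥤ ModuleCat k where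
  obj p := ModuleCat.of k (TensorProduct k (M.obj p.1.1) (N.obj p.1.2))
  map {p q} f :=
    ModuleCat.ofHom (TensorProduct.map (M.map (homOfLE (SumLe.le1 (leOfHom f)))).hom
      (N.map (homOfLE (SumLe.le2 (leOfHom f)))).hom)
  map_id p := by
    apply ModuleCat.hom_ext
    apply TensorProduct.ext'
    intro x y
    simp [homOfLE_refl]
  map_comp {p q s} f g := by
    rw [show (homOfLE (SumLe.le1 (leOfHom (f ≫ g))) : p.1.1 ⟶ s.1.1) =
        homOfLE (SumLe.le1 (leOfHom f)) ≫ homOfLE (SumLe.le1 (leOfHom g)) from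
        Subsingleton.elim _ _,
      show (homOfLE (SumLe.le2 (leOfHom (f ≫ g))) : p.1.2 ⟶ s.1.2) =
        homOfLE (SumLe.le2 (leOfHom f)) ≫ homOfLE (SumLe.le2 (leOfHom g)) from
        Subsingleton.elim _ _,
      M.map_comp, N.map_comp]
    apply ModuleCat.hom_ext
    exact (TensorProduct.map_comp _ _ _ _)

/-- The structure-map cocone: the degree-`r` diagram mapping into the degree-`r'` colimit. -/
def grCocone (M N : ℝ ⥤ ModuleCat k) {r r' : ℝ} (h : r ≤ r') :
    Cocone (grDiagram k M N r) where
  pt := colimit (grDiagram k M N r')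
  ι :=
    { app := fun j => colimit.ι (grDiagram k M N r') ⟨j.1, j.2.trans h⟩
      naturality := fun j j' f => by
        dsimp
        erw [Category.comp_id]
        exact colimit.w (grDiagram k M N r')
          (homOfLE (show (⟨j.1, j.2.trans h⟩ : SumLe r') ≤ ⟨j'.1, j'.2.trans h⟩ from
            leOfHom f)) }

/-- The graded-module tensor product of one-parameter persistence modules:
`(M ⊗_gr N)_r = colim_{s+t ≤ r} (M_s ⊗ N_t)`, with structure maps induced by
inclusions of index posets. -/
def grTensor (M N : ℝ ⥤ ModuleCat k) : ℝ ⥤ ModuleCat k where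
  obj r := colimit (grDiagram k M N r)
  map {r r'} f := colimit.desc (grDiagram k M N r) (grCocone k M N (leOfHom f))
  map_id r := by
    apply colimit.hom_ext
    intro j
    rw [colimit.ι_desc]
    erw [Category.comp_id]
    rfl
  map_comp {r r' r''} f g := by
    apply colimit.hom_ext
    intro j
    rw [colimit.ι_desc]
    erw [show colimit.ι (grDiagram k M N r) j ≫
        (colimit.desc (grDiagram k M N r) (grCocone k M N (leOfHom f)) ≫
          colimit.desc (grDiagram k M N r') (grCocone k M N (leOfHom g))) =
        (colimit.ι (grDiagram k M N r) j ≫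
          colimit.desc (grDiagram k M N r) (grCocone k M N (leOfHom f))) ≫
          colimit.desc (grDiagram k M N r') (grCocone k M N (leOfHom g)) from
      (Category.assoc _ _ _).symm, colimit.ι_desc]
    rw [show ((grCocone k M N (leOfHom f)).ι.app j : _ ⟶ _) =
        colimit.ι (grDiagram k M N r') ⟨j.1, j.2.trans (leOfHom f)⟩ from rfl]
    erw [colimit.ι_desc]
    rfl

end

lemma CategoryTheory.Limits.Cocone.ι_app_eq_zero_of_isZero {J C : Type*} [Category J] [Category C]
    [HasZeroMorphisms C] {F : J ⥤ C} (c : Cocone F) {j j' : J} (f : j ⟶ j')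
    (h : IsZero (F.obj j')) : c.ι.app j = 0 := by
  rw [← c.w f, h.eq_of_tgt (F.map f) 0, zero_comp]

lemma CategoryTheory.Limits.isZero_colimit_of_ι_eq_zero {J C : Type*} [Category J] [Category C]
    [HasZeroMorphisms C] {F : J ⥤ C} [HasColimit F] (h : ∀ j, colimit.ι F j = 0) :
    IsZero (colimit F) :=
  (IsZero.iff_id_eq_zero _).2 (colimit.hom_ext fun j => by rw [h, Category.comp_id, comp_zero])

lemma grTensor.ι_map {k : Type} [Field k] (M N : ℝ ⥤ ModuleCat k) {r r' : ℝ} (f : r ⟶ r')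
    (j : SumLe r) :
    colimit.ι (grDiagram k M N r) j ≫ (grTensor k M N).map f =
      colimit.ι (grDiagram k M N r') ⟨j.1, j.2.trans (leOfHom f)⟩ :=
  colimit.ι_desc _ _

namespace intervalModule

variable {k : Type} [Field k] {P : Type} [Preorder P] {I : Set P} (hI : IsConvexSet I)

noncomputable def one {s : P} (hs : s ∈ I) : (intervalModule k I hI).obj s :=
  (⟨1, by simp [intervalObj, hs]⟩ : intervalObj k I s)

lemma exists_eq_smul_one {s : P} (hs : s ∈ I) (u : (intervalModule k I hI).obj s) :
    ∃ c : k, u = c • one hI hs :=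
  ⟨(show intervalObj k I s from u).1, Subtype.ext (mul_one _).symm⟩

lemma map_one {s t : P} (f : s ⟶ t) (hs : s ∈ I) (ht : t ∈ I) :
    (intervalModule k I hI).map f (one hI hs) = one hI ht :=
  Subtype.ext (intervalMapAux_coe k hs ht _)

lemma subsingleton_obj {s : P} (hs : s ∉ I) : Subsingleton ((intervalModule k I hI).obj s) :=
  ⟨fun x y => (intervalObj_eq_zero k hs x).trans (intervalObj_eq_zero k hs y).symm⟩

lemma isZero_obj {s : P} (hs : s ∉ I) : IsZero ((intervalModule k I hI).obj s) :=
  @ModuleCat.isZero_of_subsingleton _ _ _ (subsingleton_obj hI hs)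

end intervalModule

namespace grDiagram

variable {k : Type} [Field k] {r : ℝ}

section
variable (M N : ℝ ⥤ ModuleCat k)

def tmul {j : SumLe r} (u : M.obj j.1.1) (v : N.obj j.1.2) : (grDiagram k M N r).obj j :=
  u ⊗ₜ[k] v

lemma map_tmul {j j' : SumLe r} (f : j ⟶ j') (u : M.obj j.1.1) (v : N.obj j.1.2) :
    (grDiagram k M N r).map f (tmul M N u v) =
      tmul M N (M.map (homOfLE (SumLe.le1 (leOfHom f))) u)
        (N.map (homOfLE (SumLe.le2 (leOfHom f))) v) :=
  rfl

lemma smul_tmul_smul {j : SumLe r} (x y : k) (u : M.obj j.1.1) (v : N.obj j.1.2) :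
    tmul M N (x • u) (y • v) = (x * y) • tmul M N u v :=
  TensorProduct.smul_tmul_smul x y u v

end

variable {I J : Set ℝ} (hI : IsConvexSet I) (hJ : IsConvexSet J)

local notation "𝒟" => grDiagram k (intervalModule k I hI) (intervalModule k J hJ) r

lemma isZero_obj {j : SumLe r} (hj : j.1 ∉ I ×ˢ J) : IsZero ((𝒟).obj j) := by
  rcases not_and_or.1 hj with hs | ht
  · have := intervalModule.subsingleton_obj (k := k) hI hs
    exact @ModuleCat.isZero_of_subsingleton _ _ ((𝒟).obj j)
      TensorProduct.uniqueLeft.instSubsingleton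
  · have := intervalModule.subsingleton_obj (k := k) hJ ht
    exact @ModuleCat.isZero_of_subsingleton _ _ ((𝒟).obj j)
      TensorProduct.uniqueRight.instSubsingleton

noncomputable def oneTmulOne {j : SumLe r} (hj : j.1 ∈ I ×ˢ J) : (𝒟).obj j :=
  tmul _ _ (intervalModule.one hI hj.1) (intervalModule.one hJ hj.2)

lemma map_oneTmulOne {j j' : SumLe r} (f : j ⟶ j') (hj : j.1 ∈ I ×ˢ J) (hj' : j'.1 ∈ I ×ˢ J) :
    (𝒟).map f (oneTmulOne hI hJ hj) = oneTmulOne hI hJ hj' := by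
  rw [oneTmulOne, map_tmul, intervalModule.map_one, intervalModule.map_one]
  rfl

lemma hom_ext {j : SumLe r} {X : ModuleCat k} {f g : (𝒟).obj j ⟶ X}
    (h : ∀ hj : j.1 ∈ I ×ˢ J, f (oneTmulOne hI hJ hj) = g (oneTmulOne hI hJ hj)) : f = g := by
  by_cases hj : j.1 ∈ I ×ˢ J
  · refine ModuleCat.hom_ext (TensorProduct.ext' fun u v => ?_)
    obtain ⟨x, rfl⟩ := intervalModule.exists_eq_smul_one hI hj.1 u
    obtain ⟨y, rfl⟩ := intervalModule.exists_eq_smul_one hJ hj.2 v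
    change f (tmul _ _ _ _) = g (tmul _ _ _ _)
    rw [smul_tmul_smul, map_smul, map_smul]
    exact congrArg _ (h hj)
  · exact (isZero_obj hI hJ hj).eq_of_src f g

end grDiagram

namespace CategoryTheory.Limits.Cocone
variable {k : Type} [Field k] {r : ℝ} {I J : Set ℝ} {hI : IsConvexSet I} {hJ : IsConvexSet J}
open grDiagram

local notation "𝒟" => grDiagram k (intervalModule k I hI) (intervalModule k J hJ) r

lemma ι_app_oneTmulOne_of_le (c : Cocone 𝒟) {j j' : SumLe r} (h : j ≤ j') (hj : j.1 ∈ I ×ˢ J)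
    (hj' : j'.1 ∈ I ×ˢ J) :
    c.ι.app j' (oneTmulOne hI hJ hj') = c.ι.app j (oneTmulOne hI hJ hj) := by
  rw [← map_oneTmulOne hI hJ (homOfLE h) hj hj', ← ConcreteCategory.comp_apply, c.w]

lemma ι_app_eq_zero_of_zigzag (c : Cocone 𝒟) {j : SumLe r}
    (h : j.1 ∈ I ×ˢ J → ∃ j₀ j₁ : SumLe r, j₀ ≤ j ∧ j₀ ≤ j₁ ∧ j₀.1 ∈ I ×ˢ J ∧ j₁.1 ∉ I ×ˢ J) :
    c.ι.app j = 0 := by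
  refine hom_ext hI hJ fun hj => ?_
  obtain ⟨j₀, j₁, h₀, h₁, hj₀, hj₁⟩ := h hj
  rw [ι_app_oneTmulOne_of_le c h₀ hj₀ hj,
    c.ι_app_eq_zero_of_isZero (homOfLE h₁) (isZero_obj hI hJ hj₁)]
  rfl

end CategoryTheory.Limits.Cocone

lemma CategoryTheory.Limits.Cocone.ι_app_Ico_Iio_eq_zero {k : Type} [Field k] {a b d r : ℝ}
    (c : Cocone (grDiagram k
      (intervalModule k (Set.Ico a b) (.of_ordConnected Set.ordConnected_Ico))
      (intervalModule k (Set.Iio d) (.of_ordConnected Set.ordConnected_Iio)) r))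
    (j : SumLe r) :
    c.ι.app j = 0 := by
  refine c.ι_app_eq_zero_of_zigzag fun hj => ?_
  set t := min j.1.2 (r - b)
  refine ⟨⟨(j.1.1, t), by linarith [j.2, min_le_left j.1.2 (r - b)]⟩,
    ⟨(b, t), by linarith [min_le_right j.1.2 (r - b)]⟩, ⟨le_rfl, min_le_left _ _⟩,
    ⟨hj.1.2.le, le_rfl⟩,
    Set.mk_mem_prod hj.1 (Set.mem_Iio.2 ((min_le_left _ _).trans_lt hj.2)),
    fun h => lt_irrefl b h.1.2⟩

section IciIio
open Set grDiagram
variable (k : Type) [Field k] (a d : ℝ)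

local notation "𝒟[" r "]" =>
  grDiagram k (intervalModule k (Ici a) (IsConvexSet.of_ordConnected ordConnected_Ici))
    (intervalModule k (Iio d) (IsConvexSet.of_ordConnected ordConnected_Iio)) r
local notation "𝕂" => intervalModule k (Iio (a + d)) (IsConvexSet.of_ordConnected ordConnected_Iio)

def baseIndex (r : ℝ) : SumLe r := ⟨(a, r - a), (add_sub_cancel a r).le⟩

variable {k a d}

lemma baseIndex_mem {r : ℝ} (h : r < a + d) : (baseIndex a r).1 ∈ Ici a ×ˢ Iio d :=
  mk_mem_prod self_mem_Ici (show r - a < d by linarith)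

lemma mem_Ici_prod_Iio_of_le {r : ℝ} (h : r < a + d) {j j' : SumLe r} (hjj' : j ≤ j')
    (hj : j.1.1 ∈ Ici a) : j'.1 ∈ Ici a ×ˢ Iio d :=
  ⟨le_trans hj hjj'.1, show j'.1.2 < d by linarith [j'.2, le_trans hj hjj'.1]⟩

lemma CategoryTheory.Limits.Cocone.ι_app_oneTmulOne_eq_baseIndex {r : ℝ} (c : Cocone 𝒟[r])
    (h : r < a + d) {j : SumLe r} (hj : j.1 ∈ Ici a ×ˢ Iio d) :
    c.ι.app j (oneTmulOne _ _ hj) =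
      c.ι.app (baseIndex a r) (oneTmulOne _ _ (baseIndex_mem h)) := by
  let j₀ : SumLe r := ⟨(a, min j.1.2 (r - a)), by linarith [min_le_right j.1.2 (r - a)]⟩
  have hj₀ : j₀.1 ∈ Ici a ×ˢ Iio d :=
    mk_mem_prod self_mem_Ici (mem_Iio.2 ((min_le_left _ _).trans_lt hj.2))
  rw [c.ι_app_oneTmulOne_of_le (show j₀ ≤ j from ⟨hj.1, min_le_left _ _⟩) hj₀,
    c.ι_app_oneTmulOne_of_le (show j₀ ≤ baseIndex a r from ⟨le_rfl, min_le_right _ _⟩) hj₀]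

lemma CategoryTheory.Limits.Cocone.ι_app_Ici_Iio_eq_zero_of_add_le {r : ℝ} (c : Cocone 𝒟[r])
    (h : a + d ≤ r) (j : SumLe r) : c.ι.app j = 0 := by
  refine c.ι_app_eq_zero_of_zigzag fun hj => ?_
  have hs : a ≤ j.1.1 := hj.1
  refine ⟨⟨(a, j.1.2), by linarith [j.2]⟩, baseIndex a r, ⟨hs, le_rfl⟩,
    ⟨le_rfl, show j.1.2 ≤ r - a by linarith [j.2]⟩, mk_mem_prod self_mem_Ici hj.2, fun hb => ?_⟩
  have : r - a < d := hb.2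
  linarith

variable (k a d) in
noncomputable def mulLeg {r : ℝ} (j : SumLe r) : (𝒟[r]).obj j ⟶ (𝕂).obj r :=
  ModuleCat.ofHom <| if h : r < a + d then
    LinearMap.codRestrict (intervalObj k (Iio (a + d)) r)
      (TensorProduct.lift ((LinearMap.mul k k).compl₁₂ (intervalObj k (Ici a) j.1.1).subtype
        (intervalObj k (Iio d) j.1.2).subtype))
      fun _ => by simp [intervalObj, h]
  else 0

lemma mulLeg_oneTmulOne {r : ℝ} (h : r < a + d) {j : SumLe r} (hj : j.1 ∈ Ici a ×ˢ Iio d) :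
    mulLeg k a d j (oneTmulOne _ _ hj) = intervalModule.one _ (mem_Iio.2 h) := by
  rw [mulLeg, dif_pos h]
  exact Subtype.ext (mul_one 1)

variable (k a d) in
noncomputable def mulCocone (r : ℝ) : Cocone 𝒟[r] where
  pt := (𝕂).obj r
  ι :=
    { app := mulLeg k a d
      naturality := fun j j' f => by
        by_cases h : r < a + d
        · refine hom_ext _ _ fun hj => ?_
          have hj' := mem_Ici_prod_Iio_of_le h (leOfHom f) hj.1
          simp only [Functor.const_obj_map, ConcreteCategory.comp_apply]
          rw [map_oneTmulOne _ _ f hj hj', mulLeg_oneTmulOne h, mulLeg_oneTmulOne h]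
          rfl
        · exact (intervalModule.isZero_obj (.of_ordConnected ordConnected_Iio)
            fun h' => h (mem_Iio.1 h')).eq_of_tgt _ _ }

noncomputable def descMulCocone {r : ℝ} (c : Cocone 𝒟[r]) : (𝕂).obj r ⟶ c.pt :=
  ModuleCat.ofHom <| if h : r < a + d then
    LinearMap.toSpanSingleton k _
        (c.ι.app (baseIndex a r) (oneTmulOne _ _ (baseIndex_mem h))) ∘ₗ
      (intervalObj k (Iio (a + d)) r).subtype
  else 0

lemma descMulCocone_one {r : ℝ} (h : r < a + d) (c : Cocone 𝒟[r]) :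
    descMulCocone c (intervalModule.one _ (mem_Iio.2 h)) =
      c.ι.app (baseIndex a r) (oneTmulOne _ _ (baseIndex_mem h)) := by
  rw [descMulCocone, dif_pos h]
  exact one_smul k _

noncomputable def isColimitMulCocone (r : ℝ) : IsColimit (mulCocone k a d r) where
  desc := descMulCocone
  fac c j := by
    by_cases h : r < a + d
    · refine hom_ext _ _ fun hj => ?_
      change descMulCocone c (mulLeg k a d j (oneTmulOne _ _ hj)) = _
      rw [c.ι_app_oneTmulOne_eq_baseIndex h hj, mulLeg_oneTmulOne h, descMulCocone_one h]
    · rw [c.ι_app_Ici_Iio_eq_zero_of_add_le (not_lt.1 h),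
        (intervalModule.isZero_obj (.of_ordConnected ordConnected_Iio)
          fun h' => h (mem_Iio.1 h')).eq_of_src (descMulCocone c) 0]
      exact comp_zero
  uniq c m hm := by
    by_cases h : r < a + d
    · change (𝕂).obj r ⟶ c.pt at m
      ext x
      obtain ⟨x, rfl⟩ :=
        intervalModule.exists_eq_smul_one (.of_ordConnected ordConnected_Iio) (mem_Iio.2 h) x
      rw [map_smul, map_smul, descMulCocone_one h, ← mulLeg_oneTmulOne h (baseIndex_mem h),
        ← hm]
      rfl
    · exact (intervalModule.isZero_obj (.of_ordConnected ordConnected_Iio)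
        fun h' => h (mem_Iio.1 h')).eq_of_src _ _

variable (k a d) in
noncomputable def grTensorIciIioIsoApp (r : ℝ) :
    (grTensor k (intervalModule k (Ici a) (.of_ordConnected ordConnected_Ici))
      (intervalModule k (Iio d) (.of_ordConnected ordConnected_Iio))).obj r ≅ (𝕂).obj r :=
  (colimit.isColimit _).coconePointUniqueUpToIso (isColimitMulCocone r)

lemma ι_grTensorIciIioIsoApp_hom {r : ℝ} (j : SumLe r) :
    colimit.ι 𝒟[r] j ≫ (grTensorIciIioIsoApp k a d r).hom = mulLeg k a d j :=
  colimit.comp_coconePointUniqueUpToIso_hom _ _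

variable (k a d) in
noncomputable def grTensorIciIioIso :
    grTensor k (intervalModule k (Ici a) (.of_ordConnected ordConnected_Ici))
      (intervalModule k (Iio d) (.of_ordConnected ordConnected_Iio)) ≅ 𝕂 :=
  NatIso.ofComponents (grTensorIciIioIsoApp k a d) fun {r r'} f => by
    refine colimit.hom_ext fun j => ?_
    erw [← Category.assoc, grTensor.ι_map, ι_grTensorIciIioIsoApp_hom, ← Category.assoc,
      ι_grTensorIciIioIsoApp_hom]
    by_cases h' : r' < a + d
    · refine hom_ext _ _ fun hj => ?_
      change mulLeg k a d _ (oneTmulOne _ _ hj) =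
        (𝕂).map f (mulLeg k a d j (oneTmulOne _ _ hj))
      rw [mulLeg_oneTmulOne h', mulLeg_oneTmulOne ((leOfHom f).trans_lt h'),
        intervalModule.map_one]
    · exact (intervalModule.isZero_obj (.of_ordConnected ordConnected_Iio)
        fun h => h' (mem_Iio.1 h)).eq_of_tgt _ _

end IciIio

open CategoryTheory in
theorem grTensor_with_lower_interval_general (k : Type) [Field k] (a b d : ℝ) :
    Limits.IsZero
      (grTensor k (intervalModule k (Set.Ico a b) (.of_ordConnected Set.ordConnected_Ico))
        (intervalModule k (Set.Iio d) (.of_ordConnected Set.ordConnected_Iio))) ∧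
    Nonempty
      (grTensor k (intervalModule k (Set.Ici a) (.of_ordConnected Set.ordConnected_Ici))
          (intervalModule k (Set.Iio d) (.of_ordConnected Set.ordConnected_Iio)) ≅
        intervalModule k (Set.Iio (a + d)) (.of_ordConnected Set.ordConnected_Iio)) :=
  ⟨Functor.isZero _ fun _ => isZero_colimit_of_ι_eq_zero fun j =>
    (colimit.cocone _).ι_app_Ico_Iio_eq_zero j, ⟨grTensorIciIioIso k a d⟩⟩

open CategoryTheory in
/-- `k[a,b) ⊗_gr k(−∞,d) = 0` for a bounded-below-and-above interval `[a,b)`, while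
`k[a,∞) ⊗_gr k(−∞,d) ≅ k(−∞, a+d)`. -/
theorem grTensor_with_lower_interval (k : Type) [Field k] (a b d : ℝ) (hab : a ≤ b) :
    Limits.IsZero
      (grTensor k (intervalModule k (Set.Ico a b) (.of_ordConnected Set.ordConnected_Ico))
        (intervalModule k (Set.Iio d) (.of_ordConnected Set.ordConnected_Iio))) ∧
    Nonempty
      (grTensor k (intervalModule k (Set.Ici a) (.of_ordConnected Set.ordConnected_Ici))
          (intervalModule k (Set.Iio d) (.of_ordConnected Set.ordConnected_Iio)) ≅
        intervalModule k (Set.Iio (a + d)) (.of_ordConnected Set.ordConnected_Iio)) :=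
  grTensor_with_lower_interval_general k a b d
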